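/- arXiv:0903.0607 — 6 statements merged into one kernel-verified Lean document; each statement's English description precedes it below -/
import Mathlib

section
/- Let (M,d) be a metric space, A₁,…,A_p ⊆ M pairwise at distance ≥ s > 0, let Θ = {-1,1}^p with uniform probability measure P, and define f_θ as in the truncated-distance construction. Then the map x ↦ F_x, where F_x(θ) = f_θ(x), is a 1-Lipschitz map from M into L₁(Θ,P). -/
/-!
Each `f_θ` is already `1`-Lipschitz, and the `L₁` distance is an average of `|f_θ x - f_θ y|`.
Near a single `A_j`, `f_θ` is `± (s/2 - dist(·, A_j))`, which is `1`-Lipschitz because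
`dist(·, A_j)` is. If `x` is near `A_i` and `y` near `A_j` with `i ≠ j`, then
`|f_θ x - f_θ y| ≤ s - dist(x, A_i) - dist(y, A_j) ≤ dist x y`, since a path from `A_i` to `A_j`
through `x` and `y` has length at least `s`.
-/

open Metric

section

variable {M ι : Type*} [PseudoMetricSpace M]

theorem Metric.le_infDist_add_dist_add_infDist {A B : Set M} {s : ℝ} (hA : A.Nonempty)
    (hB : B.Nonempty) (hAB : ∀ a ∈ A, ∀ b ∈ B, s ≤ dist a b) (u v : M) :
    s ≤ infDist u A + dist u v + infDist v B := by
  have hA_far : ∀ a ∈ A, s - dist u v - infDist v B ≤ dist u a := fun a ha => by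
    have hsB : s ≤ infDist a B := (le_infDist hB).2 (hAB a ha)
    have := infDist_le_infDist_add_dist (x := a) (y := v) (s := B)
    linarith [dist_triangle a u v, dist_comm a u]
  linarith [(le_infDist hA).2 hA_far]

structure IsSignedTruncatedDist (A : ι → Set M) (r : ℝ) (ε : ι → ℝ) (g : M → ℝ) : Prop where
  near : ∀ x j, infDist x (A j) < r → g x = ε j * (r - infDist x (A j))
  far : ∀ x, (∀ j, r ≤ infDist x (A j)) → g x = 0

namespace IsSignedTruncatedDist

variable {A : ι → Set M} {r : ℝ} {ε : ι → ℝ} {g : M → ℝ}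

theorem abs_le (hg : IsSignedTruncatedDist A r ε g) (hε : ∀ j, |ε j| ≤ 1) {x : M} {j : ι}
    (hx : infDist x (A j) < r) : |g x| ≤ r - infDist x (A j) := by
  rw [hg.near x j hx, abs_mul, abs_of_pos (sub_pos.2 hx)]
  exact mul_le_of_le_one_left (sub_pos.2 hx).le (hε j)

theorem abs_sub_le_dist_of_far (hg : IsSignedTruncatedDist A r ε g) (hε : ∀ j, |ε j| ≤ 1)
    (x : M) {y : M} (hy : ∀ j, r ≤ infDist y (A j)) : |g x - g y| ≤ dist x y := by
  rw [hg.far y hy, sub_zero]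
  by_cases hx : ∃ i, infDist x (A i) < r
  · obtain ⟨i, hi⟩ := hx
    linarith [hg.abs_le hε hi, hy i, infDist_le_infDist_add_dist (x := y) (y := x) (s := A i),
      dist_comm x y]
  · push Not at hx
    rw [hg.far x hx, abs_zero]
    exact dist_nonneg

theorem abs_sub_le_dist_of_near (hg : IsSignedTruncatedDist A r ε g) (hε : ∀ j, |ε j| ≤ 1)
    (hA : ∀ i, (A i).Nonempty)
    (hsep : ∀ i j, i ≠ j → ∀ a ∈ A i, ∀ b ∈ A j, 2 * r ≤ dist a b)
    {x y : M} {i j : ι} (hx : infDist x (A i) < r) (hy : infDist y (A j) < r) :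
    |g x - g y| ≤ dist x y := by
  by_cases hij : i = j
  · subst hij
    rw [hg.near x i hx, hg.near y i hy, ← mul_sub, abs_mul, sub_sub_sub_cancel_left]
    calc |ε i| * |infDist y (A i) - infDist x (A i)|
        ≤ |infDist y (A i) - infDist x (A i)| := mul_le_of_le_one_left (abs_nonneg _) (hε i)
      _ ≤ dist x y := by
        simpa [Real.dist_eq, dist_comm x y] using (lipschitz_infDist_pt (A i)).dist_le_mul y x
  · have hpath := le_infDist_add_dist_add_infDist (hA i) (hA j) (hsep i j hij) x y
    linarith [abs_sub (g x) (g y), hg.abs_le hε hx, hg.abs_le hε hy]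

theorem abs_sub_le_dist (hg : IsSignedTruncatedDist A r ε g) (hε : ∀ j, |ε j| ≤ 1)
    (hA : ∀ i, (A i).Nonempty)
    (hsep : ∀ i j, i ≠ j → ∀ a ∈ A i, ∀ b ∈ A j, 2 * r ≤ dist a b) (x y : M) :
    |g x - g y| ≤ dist x y := by
  by_cases hy : ∀ j, r ≤ infDist y (A j)
  · exact hg.abs_sub_le_dist_of_far hε x hy
  by_cases hx : ∀ i, r ≤ infDist x (A i)
  · rw [abs_sub_comm, dist_comm]
    exact hg.abs_sub_le_dist_of_far hε y hx
  push Not at hx hy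
  obtain ⟨i, hxi⟩ := hx
  obtain ⟨j, hyj⟩ := hy
  exact hg.abs_sub_le_dist_of_near hε hA hsep hxi hyj

end IsSignedTruncatedDist

end

theorem truncated_distance_map_into_L1_lipschitz_general {M : Type*} [MetricSpace M]
    (p : ℕ) (s : ℝ)
    (A : Fin p → Set M) (hA : ∀ i, (A i).Nonempty)
    (hsep : ∀ i j, i ≠ j → ∀ a ∈ A i, ∀ b ∈ A j, s ≤ dist a b)
    (f : (Fin p → Bool) → M → ℝ)
    (hf1 : ∀ (θ : Fin p → Bool) (x : M) (j : Fin p), Metric.infDist x (A j) < s / 2 →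
        f θ x = (if θ j then 1 else -1) * (s / 2 - Metric.infDist x (A j)))
    (hf2 : ∀ (θ : Fin p → Bool) (x : M), (∀ j : Fin p, s / 2 ≤ Metric.infDist x (A j)) →
        f θ x = 0) :
    ∀ x y : M, (1 / 2 ^ p) * ∑ θ : Fin p → Bool, |f θ x - f θ y| ≤ dist x y := by
  intro x y
  have hsep_half : ∀ i j, i ≠ j → ∀ a ∈ A i, ∀ b ∈ A j, 2 * (s / 2) ≤ dist a b := by
    intro i j hij a ha b hb
    linarith [hsep i j hij a ha b hb]
  have hlip : ∀ θ, |f θ x - f θ y| ≤ dist x y := fun θ =>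
    IsSignedTruncatedDist.abs_sub_le_dist ⟨hf1 θ, hf2 θ⟩
      (fun j => by cases θ j <;> simp) hA hsep_half x y
  calc (1 / 2 ^ p) * ∑ θ : Fin p → Bool, |f θ x - f θ y|
      ≤ (1 / 2 ^ p) * ∑ _θ : Fin p → Bool, dist x y := by gcongr with θ; exact hlip θ
    _ = dist x y := by simp

/-- The map `x ↦ F_x`, `F_x(θ) = f_θ(x)`, from `M` into `L₁(Θ, P)` where `Θ = {-1,1}^p`
carries the uniform probability measure, is `1`-Lipschitz; i.e. for all `x y ∈ M`,
`(1/2^p) ∑_θ |f_θ(x) − f_θ(y)| ≤ d(x,y)`. -/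
theorem truncated_distance_map_into_L1_lipschitz {M : Type*} [MetricSpace M]
    (p : ℕ) (s : ℝ) (hs : 0 < s)
    (A : Fin p → Set M) (hA : ∀ i, (A i).Nonempty)
    (hsep : ∀ i j, i ≠ j → ∀ a ∈ A i, ∀ b ∈ A j, s ≤ dist a b)
    (f : (Fin p → Bool) → M → ℝ)
    (hf1 : ∀ (θ : Fin p → Bool) (x : M) (j : Fin p), Metric.infDist x (A j) < s / 2 →
        f θ x = (if θ j then 1 else -1) * (s / 2 - Metric.infDist x (A j)))
    (hf2 : ∀ (θ : Fin p → Bool) (x : M), (∀ j : Fin p, s / 2 ≤ Metric.infDist x (A j)) →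
        f θ x = 0) :
    ∀ x y : M, (1 / 2 ^ p) * ∑ θ : Fin p → Bool, |f θ x - f θ y| ≤ dist x y :=
  truncated_distance_map_into_L1_lipschitz_general p s A hA hsep f hf1 hf2
end

section
/- With the notation of the truncated-distance construction: if x ∈ A_j, y ∈ M with dist(y, A_j) ≥ s/2, and θ is chosen uniformly at random from {-1,1}^p, then the probability that f_θ(x) and f_θ(y) have different signs (where sign takes values in {-1,0,1}) is at least 1/2, and moreover ∫_Θ |f_θ(x) − f_θ(y)| dP(θ) ≥ s/4. -/
/-!
Flipping the coordinate `θ_j` is a bijection of `{-1,1}^p` which negates `f_θ(x) = ±s/2` and,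
because `y` lies outside the `s/2`-neighbourhood of `A_j`, leaves `f_θ(y)` unchanged. Hence in
each pair `{θ, θ'}` of configurations differing only at `j`, the signs of `f(x)` and `f(y)`
disagree at least once, and `|f_θ(x) - f_θ(y)| + |f_θ'(x) - f_θ'(y)| ≥ 2 |f_θ(x)| = s`.
Averaging over the pairs gives both bounds.
-/

section Pairing

variable {α : Type*} [Fintype α]

theorem card_mul_le_two_mul_sum_of_le_add_comp (e : α ≃ α) (g : α → ℝ) (c : ℝ)
    (h : ∀ a, c ≤ g a + g (e a)) : Fintype.card α * c ≤ 2 * ∑ a, g a := by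
  calc Fintype.card α * c = ∑ _a : α, c := by simp
    _ ≤ ∑ a, (g a + g (e a)) := Finset.sum_le_sum fun a _ => h a
    _ = 2 * ∑ a, g a := by rw [Finset.sum_add_distrib, e.sum_comp g]; ring

theorem card_le_two_mul_ncard_of_compl_mapsTo (e : α ≃ α) (S : Set α)
    (h : ∀ a, a ∉ S → e a ∈ S) : Fintype.card α ≤ 2 * S.ncard := by
  classical
  have hS : (S.ncard : ℝ) = ∑ a, if a ∈ S then 1 else 0 := by
    rw [Finset.sum_boole, Set.ncard_eq_toFinset_card']
    simp
  have key := card_mul_le_two_mul_sum_of_le_add_comp e (fun a => if a ∈ S then (1 : ℝ) else 0) 1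
    fun a => by by_cases ha : a ∈ S <;> split_ifs <;> simp_all
  rw [← hS, mul_one] at key
  exact_mod_cast key

theorem Real.sign_ne_or_sign_neg_ne {a : ℝ} (ha : a ≠ 0) (b : ℝ) :
    Real.sign a ≠ Real.sign b ∨ Real.sign (-a) ≠ Real.sign b := by
  by_contra! h
  obtain ⟨h1, h2⟩ := h
  rw [Real.sign_neg, h1] at h2
  exact ha (Real.sign_eq_zero_iff.mp (by linarith))

theorem two_mul_abs_le_abs_sub_add_abs_neg_sub (a b : ℝ) : 2 * |a| ≤ |a - b| + |-a - b| := by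
  calc 2 * |a| = |a - b - (-a - b)| := by rw [show a - b - (-a - b) = 2 * a by ring, abs_mul,
        abs_two]
    _ ≤ |a - b| + |-a - b| := abs_sub _ _

variable {u v : α → ℝ}

theorem card_le_two_mul_ncard_sign_ne_of_neg_comp (e : α ≃ α) (hu : ∀ a, u (e a) = -u a)
    (hv : ∀ a, v (e a) = v a) (hu0 : ∀ a, u a ≠ 0) :
    Fintype.card α ≤ 2 * {a | Real.sign (u a) ≠ Real.sign (v a)}.ncard :=
  card_le_two_mul_ncard_of_compl_mapsTo e _ fun a ha => by
    have := (Real.sign_ne_or_sign_neg_ne (hu0 a) (v a)).resolve_left ha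
    simpa [hu, hv] using this

theorem card_mul_le_sum_abs_sub_of_neg_comp (e : α ≃ α) (hu : ∀ a, u (e a) = -u a)
    (hv : ∀ a, v (e a) = v a) {c : ℝ} (huc : ∀ a, |u a| = c) :
    Fintype.card α * c ≤ ∑ a, |u a - v a| := by
  have := card_mul_le_two_mul_sum_of_le_add_comp e (fun a => |u a - v a|) (2 * c) fun a => by
    simpa [hu, hv, huc] using two_mul_abs_le_abs_sub_add_abs_neg_sub (u a) (v a)
  linarith

end Pairing

section FlipCoord

variable {ι : Type*} [DecidableEq ι]

def flipCoord (j : ι) : Equiv.Perm (ι → Bool) :=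
  Function.Involutive.toPerm (fun θ => Function.update θ j (!θ j)) fun θ => by
    ext k
    by_cases hk : k = j
    · subst hk; simp
    · simp [Function.update_of_ne hk]

theorem flipCoord_apply (j : ι) (θ : ι → Bool) :
    flipCoord j θ = Function.update θ j (!θ j) :=
  rfl

theorem flipCoord_apply_self (j : ι) (θ : ι → Bool) : flipCoord j θ j = !θ j := by
  simp [flipCoord_apply]

theorem flipCoord_apply_of_ne {j k : ι} (hk : k ≠ j) (θ : ι → Bool) :
    flipCoord j θ k = θ k := by
  simp [flipCoord_apply, Function.update_of_ne hk]

end FlipCoord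

theorem apply_eq_apply_of_forall_infDist_lt {ι M : Type*} [PseudoMetricSpace M] {s : ℝ} {A : ι → Set M}
    {f : (ι → Bool) → M → ℝ}
    (hf1 : ∀ (θ : ι → Bool) (x : M) (j : ι), Metric.infDist x (A j) < s / 2 →
        f θ x = (if θ j then 1 else -1) * (s / 2 - Metric.infDist x (A j)))
    (hf2 : ∀ (θ : ι → Bool) (x : M), (∀ j : ι, s / 2 ≤ Metric.infDist x (A j)) → f θ x = 0)
    {θ θ' : ι → Bool} {y : M} (h : ∀ k, Metric.infDist y (A k) < s / 2 → θ k = θ' k) :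
    f θ y = f θ' y := by
  by_cases hfar : ∀ k, s / 2 ≤ Metric.infDist y (A k)
  · rw [hf2 θ y hfar, hf2 θ' y hfar]
  · obtain ⟨k, hk⟩ := not_forall.mp hfar
    have hk : Metric.infDist y (A k) < s / 2 := lt_of_not_ge hk
    rw [hf1 θ y k hk, hf1 θ' y k hk, h k hk]

theorem truncated_distance_sign_separation_general {M : Type*} [MetricSpace M]
    (p : ℕ) (s : ℝ) (hs : 0 < s)
    (A : Fin p → Set M)
    (f : (Fin p → Bool) → M → ℝ)
    (hf1 : ∀ (θ : Fin p → Bool) (x : M) (j : Fin p), Metric.infDist x (A j) < s / 2 →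
        f θ x = (if θ j then 1 else -1) * (s / 2 - Metric.infDist x (A j)))
    (hf2 : ∀ (θ : Fin p → Bool) (x : M), (∀ j : Fin p, s / 2 ≤ Metric.infDist x (A j)) →
        f θ x = 0)
    (j : Fin p) (x y : M) (hx : x ∈ A j) (hy : s / 2 ≤ Metric.infDist y (A j)) :
    (1 : ℝ) / 2 ≤
        (Set.ncard {θ : Fin p → Bool | Real.sign (f θ x) ≠ Real.sign (f θ y)} : ℝ) / 2 ^ p ∧
    s / 4 ≤ (1 / 2 ^ p) * ∑ θ : Fin p → Bool, |f θ x - f θ y| := by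
  have hx0 : Metric.infDist x (A j) = 0 := Metric.infDist_zero_of_mem hx
  have hfx (θ : Fin p → Bool) : f θ x = (if θ j then 1 else -1) * (s / 2) := by
    simpa [hx0] using hf1 θ x j (by rw [hx0]; linarith)
  have hflip_x (θ : Fin p → Bool) : f (flipCoord j θ) x = -f θ x := by
    rw [hfx, hfx, flipCoord_apply_self]; cases θ j <;> simp
  have hflip_y (θ : Fin p → Bool) : f (flipCoord j θ) y = f θ y :=
    apply_eq_apply_of_forall_infDist_lt hf1 hf2 fun k hk =>
      flipCoord_apply_of_ne (by rintro rfl; linarith) θ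
  have habs (θ : Fin p → Bool) : |f θ x| = s / 2 := by
    rw [hfx]; cases θ j <;> simp [abs_of_pos (half_pos hs)]
  have hcard : Fintype.card (Fin p → Bool) = 2 ^ p := by simp
  have hsign := card_le_two_mul_ncard_sign_ne_of_neg_comp (u := (f · x)) (v := (f · y))
    (flipCoord j) hflip_x hflip_y fun θ h => by linarith [habs θ, abs_eq_zero.mpr h]
  have hsum := card_mul_le_sum_abs_sub_of_neg_comp (u := (f · x)) (v := (f · y))
    (flipCoord j) hflip_x hflip_y habs
  rw [hcard] at hsign hsum
  push_cast at hsum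
  constructor
  · rw [le_div_iff₀ (by positivity)]
    have := (Nat.cast_le (α := ℝ)).mpr hsign
    push_cast at this
    linarith
  · rw [one_div, inv_mul_eq_div, le_div_iff₀ (by positivity)]
    nlinarith [pow_pos (two_pos : (0 : ℝ) < 2) p]

/-- With the truncated-distance construction: if `x ∈ A_j` and `dist(y, A_j) ≥ s/2`, then
for `θ` uniform on `{-1,1}^p`, the probability that `f_θ(x)` and `f_θ(y)` have different
signs (signs valued in `{-1,0,1}`) is at least `1/2`, and `∫_Θ |f_θ(x) − f_θ(y)| dP ≥ s/4`. -/
theorem truncated_distance_sign_separation {M : Type*} [MetricSpace M]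
    (p : ℕ) (s : ℝ) (hs : 0 < s)
    (A : Fin p → Set M) (hA : ∀ i, (A i).Nonempty)
    (hsep : ∀ i j, i ≠ j → ∀ a ∈ A i, ∀ b ∈ A j, s ≤ dist a b)
    (f : (Fin p → Bool) → M → ℝ)
    (hf1 : ∀ (θ : Fin p → Bool) (x : M) (j : Fin p), Metric.infDist x (A j) < s / 2 →
        f θ x = (if θ j then 1 else -1) * (s / 2 - Metric.infDist x (A j)))
    (hf2 : ∀ (θ : Fin p → Bool) (x : M), (∀ j : Fin p, s / 2 ≤ Metric.infDist x (A j)) →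
        f θ x = 0)
    (j : Fin p) (x y : M) (hx : x ∈ A j) (hy : s / 2 ≤ Metric.infDist y (A j)) :
    (1 : ℝ) / 2 ≤
        (Set.ncard {θ : Fin p → Bool | Real.sign (f θ x) ≠ Real.sign (f θ y)} : ℝ) / 2 ^ p ∧
    s / 4 ≤ (1 / 2 ^ p) * ∑ θ : Fin p → Bool, |f θ x - f θ y| :=
  truncated_distance_sign_separation_general p s hs A f hf1 hf2 j x y hx hy
end

section
/- Exhaustion lemma: let (M,d) be a finite metric space with diameter ≥ R, let ν be a probability measure on M, and suppose that every subset F ⊆ M of diameter ≥ R contains a subset A ⊆ F of diameter < R with ν(∂_F A) ≤ φ·ν(A), where ∂_F A = {x ∈ F \ A : dist(x,A) ≤ s}. Then there exist finitely many pairwise disjoint sets A₁,…,A_p, each of diameter < R, with pairwise distances d(A_i,A_j) > s for i ≠ j, such that the sets A_i together with their boundaries ∂_{F_i} A_i (taken in the successively shrinking sets F₁ ⊇ F₂ ⊇ …) cover all of M, and ν(⋃_i ∂_{F_i} A_i) ≤ φ·ν(⋃_i A_i). -/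
/-!
Peel off pieces greedily: in the current set `F` (initially all of `M`) choose the set `A` given
by the hypothesis (or `A = F` once `diam F < R`), and continue in `F \ (A ∪ ∂_F A)`. Since `M` is
finite and every piece is nonempty, the process stops with nothing left, so the pieces and their
boundaries cover `M`. A later piece lies outside an earlier piece's boundary, hence at distance
`> s` from it; the sets `A_i ∪ ∂_{F_i} A_i` are pairwise disjoint, so summing the local estimates
`ν(∂_{F_i} A_i) ≤ φ ν(A_i)` gives the global one.
-/

/-- The measure of a set given by weights `w` on a finite type. -/
noncomputable def nuW {M : Type*} [Fintype M] (w : M → ℝ) (A : Set M) : ℝ :=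
  ∑ x, A.indicator w x

/-- The boundary of `A` inside `F` at scale `s`:
`∂_F A = {x ∈ F \ A : dist(x,A) ≤ s}`. -/
def bdry {M : Type*} [MetricSpace M] (s : ℝ) (F A : Set M) : Set M :=
  {x | x ∈ F ∧ x ∉ A ∧ Metric.infDist x A ≤ s}

section Measure

variable {M : Type*} [Fintype M] (w : M → ℝ)

lemma nuW_nonneg (hw0 : ∀ x, 0 ≤ w x) (A : Set M) : 0 ≤ nuW w A :=
  Finset.sum_nonneg fun x _ => Set.indicator_nonneg (fun y _ => hw0 y) x

lemma nuW_biUnion {ι : Type*} (I : Finset ι) (B : ι → Set M)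
    (hB : (I : Set ι).PairwiseDisjoint B) :
    nuW w (⋃ i ∈ I, B i) = ∑ i ∈ I, nuW w (B i) := by
  simp only [nuW, Finset.indicator_biUnion_apply I B hB]
  exact Finset.sum_comm

end Measure

section Boundary

variable {M : Type*} [MetricSpace M] {s : ℝ}

lemma bdry_subset (F A : Set M) : bdry s F A ⊆ F := fun _ hx => hx.1

@[simp]
lemma bdry_self (F : Set M) : bdry s F F = ∅ :=
  Set.eq_empty_of_forall_notMem fun _ hx => hx.2.1 hx.1

lemma lt_dist_of_mem_diff_bdry {F A : Set M} {a b : M} (ha : a ∈ A)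
    (hb : b ∈ F \ (A ∪ bdry s F A)) : s < dist a b := by
  have hb_inf : s < Metric.infDist b A :=
    not_le.1 fun h => hb.2 (Or.inr ⟨hb.1, fun hA => hb.2 (Or.inl hA), h⟩)
  rw [dist_comm]
  exact hb_inf.trans_le (Metric.infDist_le_dist_of_mem ha)

end Boundary

section Exhaustion

open Function

variable {M : Type*} [MetricSpace M] {s : ℝ} {F A : ℕ → Set M}
  (hA : ∀ n, A n ⊆ F n) (hF : ∀ n, F (n + 1) = F n \ (A n ∪ bdry s (F n) (A n)))
include hF

lemma antitone_of_exhaustion : Antitone F :=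
  antitone_nat_of_succ_le fun n => (hF n).le.trans Set.sdiff_subset

include hA

lemma mem_diff_of_exhaustion {i j : ℕ} (hij : i < j) {x : M}
    (hx : x ∈ A j ∪ bdry s (F j) (A j)) : x ∈ F i \ (A i ∪ bdry s (F i) (A i)) := by
  rw [← hF]
  exact antitone_of_exhaustion hF hij (Set.union_subset (hA j) (bdry_subset _ _) hx)

lemma pairwise_disjoint_of_exhaustion :
    Pairwise (Disjoint on (fun n => A n ∪ bdry s (F n) (A n))) :=
  (pairwise_disjoint_on _).2 fun _ _ hij =>
    Set.disjoint_right.2 fun _ hx => (mem_diff_of_exhaustion hA hF hij hx).2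

lemma lt_dist_of_exhaustion {i j : ℕ} (hij : i ≠ j) {a b : M} (ha : a ∈ A i)
    (hb : b ∈ A j) : s < dist a b := by
  rcases hij.lt_or_gt with h | h
  · exact lt_dist_of_mem_diff_bdry ha (mem_diff_of_exhaustion hA hF h (Or.inl hb))
  · rw [dist_comm]
    exact lt_dist_of_mem_diff_bdry hb (mem_diff_of_exhaustion hA hF h (Or.inl ha))

omit hA in
lemma subset_biUnion_union_of_exhaustion (n : ℕ) :
    F 0 ⊆ (⋃ i ∈ Finset.range n, (A i ∪ bdry s (F i) (A i))) ∪ F n := by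
  induction n with
  | zero => simp
  | succ n ih =>
    intro x hx
    simp only [Finset.range_add_one, Finset.set_biUnion_insert, hF n]
    by_cases hn : x ∈ A n ∪ bdry s (F n) (A n)
    · exact Or.inl (Or.inl hn)
    · rcases ih hx with h | h
      · exact Or.inl (Or.inr h)
      · exact Or.inr ⟨h, hn⟩

end Exhaustion

lemma exists_eq_empty_of_antitone {α : Type*} [Finite α] {F : ℕ → Set α} (hF : Antitone F)
    (hstep : ∀ n, (F n).Nonempty → F (n + 1) ≠ F n) : ∃ n, F n = ∅ := by
  obtain ⟨i, j, hne, heq⟩ := Finite.exists_ne_map_eq_of_infinite F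
  wlog hij : i < j generalizing i j
  · exact this j i hne.symm heq.symm (hne.lt_or_gt.resolve_left hij)
  refine ⟨i, Set.not_nonempty_iff_eq_empty.1 fun hi => hstep i hi ?_⟩
  exact (hF i.le_succ).antisymm (heq.le.trans (hF (Nat.succ_le_of_lt hij)))

lemma exists_piece {M : Type*} [MetricSpace M] [Fintype M] {s R φ : ℝ} (hφ : 0 ≤ φ)
    {w : M → ℝ} (hw0 : ∀ x, 0 ≤ w x)
    (hex : ∀ F : Set M, R ≤ Metric.diam F →
      ∃ A : Set M, A ⊆ F ∧ A.Nonempty ∧ Metric.diam A < R ∧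
        nuW w (bdry s F A) ≤ φ * nuW w A) (F : Set M) :
    ∃ A : Set M, A ⊆ F ∧ (F.Nonempty → A.Nonempty) ∧ Metric.diam A < R ∧
      nuW w (bdry s F A) ≤ φ * nuW w A := by
  by_cases hF : R ≤ Metric.diam F
  · obtain ⟨A, hAF, hA, hdiam, hbd⟩ := hex F hF
    exact ⟨A, hAF, fun _ => hA, hdiam, hbd⟩
  · refine ⟨F, subset_rfl, id, not_le.1 hF, ?_⟩
    simpa [nuW] using mul_nonneg hφ (nuW_nonneg w hw0 F)

theorem exhaustion_lemma_general {M : Type*} [MetricSpace M] [Fintype M]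
    (s R φ : ℝ) (hφ : 0 ≤ φ)
    (w : M → ℝ) (hw0 : ∀ x, 0 ≤ w x)
    (hex : ∀ F : Set M, R ≤ Metric.diam F →
      ∃ A : Set M, A ⊆ F ∧ A.Nonempty ∧ Metric.diam A < R ∧
        nuW w (bdry s F A) ≤ φ * nuW w A) :
    ∃ (p : ℕ) (A Fs : ℕ → Set M),
      Fs 0 = Set.univ ∧
      (∀ i < p, A i ⊆ Fs i ∧ Metric.diam (A i) < R ∧
        Fs (i + 1) = Fs i \ (A i ∪ bdry s (Fs i) (A i))) ∧
      (∀ i j, i < p → j < p → i ≠ j → ∀ a ∈ A i, ∀ b ∈ A j, s < dist a b) ∧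
      (⋃ i ∈ Finset.range p, (A i ∪ bdry s (Fs i) (A i))) = Set.univ ∧
      nuW w (⋃ i ∈ Finset.range p, bdry s (Fs i) (A i)) ≤
        φ * nuW w (⋃ i ∈ Finset.range p, A i) := by
  choose piece hsub hne hdiamA hbd using exists_piece hφ hw0 hex
  set Fs : ℕ → Set M := fun n => (fun F => F \ (piece F ∪ bdry s F (piece F)))^[n] Set.univ
  have hFs (n : ℕ) : Fs (n + 1) = Fs n \ (piece (Fs n) ∪ bdry s (Fs n) (piece (Fs n))) :=
    Function.iterate_succ_apply' _ _ _
  have hA (n : ℕ) : piece (Fs n) ⊆ Fs n := hsub _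
  obtain ⟨p, hp⟩ : ∃ p, Fs p = ∅ := by
    refine exists_eq_empty_of_antitone (antitone_of_exhaustion hFs) fun n hn heq => ?_
    obtain ⟨a, ha⟩ := hne _ hn
    have ha' : a ∈ Fs (n + 1) := heq ▸ hA n ha
    exact (hFs n ▸ ha').2 (Or.inl ha)
  have hdisj := pairwise_disjoint_of_exhaustion hA hFs
  refine ⟨p, fun n => piece (Fs n), Fs, rfl, fun i _ => ⟨hA i, hdiamA _, hFs i⟩,
    fun i j _ _ hij _ ha _ hb => lt_dist_of_exhaustion hA hFs hij ha hb, ?_, ?_⟩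
  · have hcover := subset_biUnion_union_of_exhaustion hFs p
    rw [hp, Set.union_empty] at hcover
    exact Set.univ_subset_iff.1 hcover
  · have hdisjA := (pairwise_disjoint_mono hdisj fun _ => Set.subset_union_left).set_pairwise
    have hdisjB := (pairwise_disjoint_mono hdisj fun _ => Set.subset_union_right).set_pairwise
    rw [nuW_biUnion w _ _ (hdisjB _), nuW_biUnion w _ _ (hdisjA _), Finset.mul_sum]
    exact Finset.sum_le_sum fun i _ => hbd _

/-- Exhaustion lemma: if every subset `F` of diameter `≥ R` of a finite metric space `M`
contains a (nonempty) subset `A` of diameter `< R` with `ν(∂_F A) ≤ φ·ν(A)`, then one can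
exhaust `M` by pairwise disjoint sets `A₁,…,A_p` of diameter `< R`, at pairwise distances
`> s`, which together with their boundaries `∂_{F_i} A_i` (in the shrinking sets
`F₁ = M ⊇ F₂ ⊇ …`) cover `M`, and with `ν(⋃ ∂_{F_i} A_i) ≤ φ·ν(⋃ A_i)`. -/
theorem exhaustion_lemma {M : Type*} [MetricSpace M] [Fintype M]
    (s R φ : ℝ) (hs : 0 < s) (hR : 0 < R) (hφ : 0 ≤ φ)
    (w : M → ℝ) (hw0 : ∀ x, 0 ≤ w x) (hw1 : ∑ x, w x = 1)
    (hdiam : R ≤ Metric.diam (Set.univ : Set M))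
    (hex : ∀ F : Set M, R ≤ Metric.diam F →
      ∃ A : Set M, A ⊆ F ∧ A.Nonempty ∧ Metric.diam A < R ∧
        nuW w (bdry s F A) ≤ φ * nuW w A) :
    ∃ (p : ℕ) (A Fs : ℕ → Set M),
      Fs 0 = Set.univ ∧
      (∀ i < p, A i ⊆ Fs i ∧ Metric.diam (A i) < R ∧
        Fs (i + 1) = Fs i \ (A i ∪ bdry s (Fs i) (A i))) ∧
      (∀ i j, i < p → j < p → i ≠ j → ∀ a ∈ A i, ∀ b ∈ A j, s < dist a b) ∧
      (⋃ i ∈ Finset.range p, (A i ∪ bdry s (Fs i) (A i))) = Set.univ ∧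
      nuW w (⋃ i ∈ Finset.range p, bdry s (Fs i) (A i)) ≤
        φ * nuW w (⋃ i ∈ Finset.range p, A i) :=
  exhaustion_lemma_general s R φ hφ w hw0 hex
end

section
/- Random sign separation estimate: let (Ω, P) = (Λ × Θ, μ ⊗ P_Θ) where Θ = {-1,1}^ℕ with the fair-coin product measure, and let F_u, F_v : Ω → ℝ be measurable functions such that for every λ ∈ Λ, F_u(λ,·) = θ_{k(λ)}·a(λ) and F_v(λ,·) = θ_{l(λ)}·b(λ) with k(λ) ≠ l(λ), a(λ),b(λ) ≥ 0, and ∫_Λ a(λ) dμ ≥ εΔ, ∫_Λ b(λ) dμ ≥ εΔ. Then ‖F_u − F_v‖_{L₁(Ω)} ≥ εΔ. -/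
/-!
On the fibre over `λ`, the signs `X (k λ)` and `X (l λ)` differ with probability `1/2`, and
wherever they differ `|X_k a - X_l b| = a + b`. Hence the `θ`-integral is at least `(a + b) / 2`,
and integrating over `λ` (Fubini) gives at least the average of `∫ a` and `∫ b`, so at least `εΔ`.
-/

open MeasureTheory

namespace RandomSign

lemma abs_mul_sub_mul_le {s t a b : ℝ} (hs : |s| = 1) (ht : |t| = 1) (ha : 0 ≤ a) (hb : 0 ≤ b) :
    |s * a - t * b| ≤ a + b :=
  calc |s * a - t * b| ≤ |s * a| + |t * b| := abs_sub _ _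
    _ = a + b := by rw [abs_mul, abs_mul, hs, ht, one_mul, one_mul, abs_of_nonneg ha,
      abs_of_nonneg hb]

lemma abs_mul_sub_mul_of_ne {s t a b : ℝ} (hs : |s| = 1) (ht : |t| = 1) (hst : s ≠ t)
    (ha : 0 ≤ a) (hb : 0 ≤ b) : |s * a - t * b| = a + b := by
  obtain rfl : t = -s := (abs_eq_abs.1 (ht.trans hs.symm)).resolve_left hst.symm
  rw [neg_mul, sub_neg_eq_add, ← mul_add, abs_mul, hs, one_mul, abs_of_nonneg (add_nonneg ha hb)]

variable {Λ Θ : Type*} [MeasurableSpace Λ] [MeasurableSpace Θ]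

lemma measurable_apply_comp_fst {ι : Type*} [Countable ι] [MeasurableSpace ι]
    [MeasurableSingletonClass ι] {X : ι → Θ → ℝ} (hX : ∀ j, Measurable (X j)) {k : Λ → ι}
    (hk : Measurable k) : Measurable fun q : Λ × Θ => X (k q.1) q.2 :=
  (measurable_from_prod_countable_left (f := fun p : Θ × ι => X p.2 p.1) hX).comp
    (measurable_snd.prodMk (hk.comp measurable_fst))

lemma mul_measureReal_ne_le_integral_abs {P : Measure Θ} [IsFiniteMeasure P] {s t : Θ → ℝ}
    (hs : Measurable s) (ht : Measurable t) (hs1 : ∀ θ, |s θ| = 1) (ht1 : ∀ θ, |t θ| = 1)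
    {a b : ℝ} (ha : 0 ≤ a) (hb : 0 ≤ b) :
    (a + b) * P.real {θ | s θ ≠ t θ} ≤ ∫ θ, |s θ * a - t θ * b| ∂P := by
  have hint : Integrable (fun θ => |s θ * a - t θ * b|) P :=
    (integrable_const (a + b)).mono'
      ((hs.mul_const a).sub (ht.mul_const b)).abs.aestronglyMeasurable (.of_forall fun θ => by
        rw [Real.norm_eq_abs, abs_abs]; exact abs_mul_sub_mul_le (hs1 θ) (ht1 θ) ha hb)
  calc (a + b) * P.real {θ | s θ ≠ t θ}
      ≤ ∫ θ in {θ | s θ ≠ t θ}, |s θ * a - t θ * b| ∂P :=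
        setIntegral_ge_of_const_le_real (measurableSet_eq_fun hs ht).compl (measure_ne_top _ _)
          (fun θ hθ => (abs_mul_sub_mul_of_ne (hs1 θ) (ht1 θ) hθ ha hb).ge) hint.integrableOn
    _ ≤ ∫ θ, |s θ * a - t θ * b| ∂P :=
        setIntegral_le_integral hint (.of_forall fun _ => abs_nonneg _)

lemma integrable_abs_mul_sub_mul_prod {μ : Measure Λ} {P : Measure Θ} [IsFiniteMeasure P]
    {S T : Λ × Θ → ℝ} (hS : Measurable S) (hT : Measurable T) (hS1 : ∀ q, |S q| = 1)
    (hT1 : ∀ q, |T q| = 1) {a b : Λ → ℝ} (ha0 : ∀ x, 0 ≤ a x) (hb0 : ∀ x, 0 ≤ b x)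
    (ha : Integrable a μ) (hb : Integrable b μ) :
    Integrable (fun q => |S q * a q.1 - T q * b q.1|) (μ.prod P) := by
  have hab : Integrable (fun q : Λ × Θ => a q.1 + b q.1) (μ.prod P) :=
    (ha.add hb).comp_fst P
  refine hab.mono' ?_ (.of_forall fun q => ?_)
  · exact ((hS.aestronglyMeasurable.mul (ha.comp_fst P).1).sub
      (hT.aestronglyMeasurable.mul (hb.comp_fst P).1)).norm
  · rw [Real.norm_eq_abs, abs_abs]
    exact abs_mul_sub_mul_le (hS1 q) (hT1 q) (ha0 q.1) (hb0 q.1)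

end RandomSign

open RandomSign in
theorem random_sign_separation_general {Λ Θ : Type*} [MeasurableSpace Λ] [MeasurableSpace Θ]
    (μ : Measure Λ) (P : Measure Θ) [IsProbabilityMeasure μ] [IsProbabilityMeasure P]
    (X : ℕ → Θ → ℝ) (hXmeas : ∀ j, Measurable (X j))
    (hXval : ∀ (j : ℕ) (θ : Θ), X j θ = 1 ∨ X j θ = -1)
    (hXdiff : ∀ i j : ℕ, i ≠ j → P {θ | X i θ ≠ X j θ} = 1 / 2)
    (k l : Λ → ℕ) (hk : Measurable k) (hl : Measurable l) (hkl : ∀ x : Λ, k x ≠ l x)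
    (a b : Λ → ℝ) (ha0 : ∀ x, 0 ≤ a x) (hb0 : ∀ x, 0 ≤ b x)
    (hai : Integrable a μ) (hbi : Integrable b μ)
    (ε Δ : ℝ)
    (hA : ε * Δ ≤ ∫ x, a x ∂μ) (hB : ε * Δ ≤ ∫ x, b x ∂μ) :
    ε * Δ ≤ ∫ q : Λ × Θ, |X (k q.1) q.2 * a q.1 - X (l q.1) q.2 * b q.1| ∂(μ.prod P) := by
  have hX1 : ∀ j θ, |X j θ| = 1 := fun j θ => (abs_eq zero_le_one).2 (hXval j θ)
  have hint := integrable_abs_mul_sub_mul_prod (μ := μ) (P := P)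
    (measurable_apply_comp_fst hXmeas hk) (measurable_apply_comp_fst hXmeas hl)
    (fun _ => hX1 _ _) (fun _ => hX1 _ _) ha0 hb0 hai hbi
  have hfibre : ∀ x, (a x + b x) / 2 ≤ ∫ θ, |X (k x) θ * a x - X (l x) θ * b x| ∂P := fun x => by
    have := mul_measureReal_ne_le_integral_abs (P := P) (hXmeas (k x)) (hXmeas (l x))
      (hX1 _) (hX1 _) (ha0 x) (hb0 x)
    rwa [measureReal_def, hXdiff _ _ (hkl x), ENNReal.toReal_div, ENNReal.toReal_one,
      ENNReal.toReal_ofNat, ← div_eq_mul_one_div] at this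
  calc ε * Δ ≤ ∫ x, (a x + b x) / 2 ∂μ := by rw [integral_div, integral_add hai hbi]; linarith
    _ ≤ ∫ x, ∫ θ, |X (k x) θ * a x - X (l x) θ * b x| ∂P ∂μ :=
      integral_mono ((hai.add hbi).div_const 2) hint.integral_prod_left hfibre
    _ = _ := (integral_prod _ hint).symm

/-- Random sign separation estimate.  `(Ω, P) = (Λ × Θ, μ ⊗ P)`, where on `Θ` live
fair-coin signs `X j : Θ → {-1,1}` with `P(X i ≠ X j) = 1/2` for `i ≠ j`.  If
`F_u(λ,θ) = X_{k(λ)}(θ)·a(λ)`, `F_v(λ,θ) = X_{l(λ)}(θ)·b(λ)` with `k(λ) ≠ l(λ)`,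
`a, b ≥ 0`, and `∫ a dμ ≥ εΔ`, `∫ b dμ ≥ εΔ`, then `‖F_u − F_v‖_{L₁} ≥ εΔ`. -/
theorem random_sign_separation {Λ Θ : Type*} [MeasurableSpace Λ] [MeasurableSpace Θ]
    (μ : Measure Λ) (P : Measure Θ) [IsProbabilityMeasure μ] [IsProbabilityMeasure P]
    (X : ℕ → Θ → ℝ) (hXmeas : ∀ j, Measurable (X j))
    (hXval : ∀ (j : ℕ) (θ : Θ), X j θ = 1 ∨ X j θ = -1)
    (hXdiff : ∀ i j : ℕ, i ≠ j → P {θ | X i θ ≠ X j θ} = 1 / 2)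
    (k l : Λ → ℕ) (hk : Measurable k) (hl : Measurable l) (hkl : ∀ x : Λ, k x ≠ l x)
    (a b : Λ → ℝ) (ha0 : ∀ x, 0 ≤ a x) (hb0 : ∀ x, 0 ≤ b x)
    (hai : Integrable a μ) (hbi : Integrable b μ)
    (ε Δ : ℝ) (hε : 0 < ε) (hΔ : 0 < Δ)
    (hA : ε * Δ ≤ ∫ x, a x ∂μ) (hB : ε * Δ ≤ ∫ x, b x ∂μ) :
    ε * Δ ≤ ∫ q : Λ × Θ, |X (k q.1) q.2 * a q.1 - X (l q.1) q.2 * b q.1| ∂(μ.prod P) :=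
  random_sign_separation_general μ P X hXmeas hXval hXdiff k l hk hl hkl a b ha0 hb0 hai hbi ε Δ hA
    hB
end

section
/- Gluing lemma for coarse embeddings: let X be a metric space, O ∈ X, and for each i ≥ 0 let φ_i : X → L₁(Ω_i) be 1-Lipschitz maps into disjoint L₁ spaces. Suppose there are constants ε > 0 and an increasing sequence d_i → ∞ such that d(u,v) ≥ d_i implies ‖φ_i(u) − φ_i(v)‖ ≥ 2^i ε. Define φ(v) = ⊕_i (2/3)^i (φ_i(v) − φ_i(O)) ∈ L₁(⊔_i Ω_i). Then φ is well-defined (φ(v) ∈ L₁ for each v), 3-Lipschitz, and satisfies ‖φ(u) − φ(v)‖ ≥ (4/3)^i ε whenever d(u,v) ≥ d_i; in particular, if d_i grows in i (e.g., d_i is polynomial in 2^i), φ is a coarse embedding of X into L₁. -/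
/-!
Each coordinate of `Φ u - Φ v` is `(2/3)^i • (φ_i u - φ_i v)`, of norm at most `(2/3)^i d(u,v)`;
summing the geometric series gives both that `Φ v` lies in `ℓ¹` and that `Φ` is `3`-Lipschitz.
Conversely the `ℓ¹` norm dominates every single coordinate, and when `d(u,v) ≥ d_i` the `i`-th one
has norm at least `(2/3)^i 2^i ε = (4/3)^i ε`. The compression function of the coarse embedding is
the largest of these lower bounds that the distance unlocks; it is finite because only finitely
many `d_i` lie below any given distance.
-/

open Filter Set
open scoped NNReal

theorem lp.norm_eq_tsum_norm {ι : Type*} {E : ι → Type*} [∀ i, NormedAddCommGroup (E i)]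
    (f : lp E 1) : ‖f‖ = ∑' i, ‖f i‖ := by
  simpa using lp.norm_eq_tsum_rpow (by simp) f

section Envelope

variable {ι : Type*} (d a : ι → ℝ)

noncomputable def thresholdEnvelope (t : ℝ) : ℝ :=
  sSup (insert 0 (a '' {i | d i ≤ t}))

variable {d a}

theorem bddAbove_thresholdEnvelope_set (hd : Tendsto d cofinite atTop) (t : ℝ) :
    BddAbove (insert 0 (a '' {i | d i ≤ t})) := by
  have hfin : {i | d i ≤ t}.Finite := by
    simpa using eventually_cofinite.1 (hd.eventually_gt_atTop t)
  exact ((hfin.image a).insert 0).bddAbove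

theorem monotone_thresholdEnvelope (hd : Tendsto d cofinite atTop) :
    Monotone (thresholdEnvelope d a) := fun _ t hst =>
  csSup_le_csSup (bddAbove_thresholdEnvelope_set hd t) (insert_nonempty _ _)
    (insert_subset_insert (image_mono fun _ hi => le_trans hi hst))

theorem le_thresholdEnvelope (hd : Tendsto d cofinite atTop) {i : ι} {t : ℝ} (hi : d i ≤ t) :
    a i ≤ thresholdEnvelope d a t :=
  le_csSup (bddAbove_thresholdEnvelope_set hd t) (mem_insert_of_mem _ (mem_image_of_mem a hi))

theorem thresholdEnvelope_le {t s : ℝ} (hs : 0 ≤ s) (h : ∀ i, d i ≤ t → a i ≤ s) :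
    thresholdEnvelope d a t ≤ s := by
  refine csSup_le (insert_nonempty _ _) ?_
  rintro _ (rfl | ⟨i, hi, rfl⟩)
  exacts [hs, h i hi]

theorem tendsto_thresholdEnvelope (hd : Tendsto d cofinite atTop) (ha : ¬BddAbove (range a)) :
    Tendsto (thresholdEnvelope d a) atTop atTop := by
  refine tendsto_atTop_atTop.2 fun M => ?_
  obtain ⟨_, ⟨i, rfl⟩, hi⟩ := not_bddAbove_iff.1 ha M
  exact ⟨d i, fun t ht => hi.le.trans (le_thresholdEnvelope hd ht)⟩

end Envelope

section Glue

variable {ι X : Type*} [PseudoMetricSpace X] {E : ι → Type*}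
  [∀ i, NormedAddCommGroup (E i)] {w : ι → ℝ≥0} {K : ℝ≥0} {φ : ∀ i, X → E i}

theorem norm_sub_le_mul_dist (hφ : ∀ i, LipschitzWith K (φ i)) (i : ι) (u v : X) :
    ‖φ i u - φ i v‖ ≤ K * dist u v := by
  simpa [dist_eq_norm] using (hφ i).dist_le_mul u v

theorem summable_mul_norm_sub (hw : Summable w) (hφ : ∀ i, LipschitzWith K (φ i)) (u v : X) :
    Summable fun i => (w i : ℝ) * ‖φ i u - φ i v‖ := by
  refine Summable.of_nonneg_of_le (fun i => by positivity) (fun i => ?_)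
    ((NNReal.summable_coe.2 hw).mul_right (K * dist u v))
  exact mul_le_mul_of_nonneg_left (norm_sub_le_mul_dist hφ i u v) (w i).2

variable [∀ i, NormedSpace ℝ (E i)]

theorem memℓp_one_smul_sub (hw : Summable w) (hφ : ∀ i, LipschitzWith K (φ i)) (u v : X) :
    Memℓp (fun i => (w i : ℝ) • (φ i u - φ i v)) 1 :=
  memℓp_gen (by simpa [norm_smul] using summable_mul_norm_sub hw hφ u v)

noncomputable def lpGlue (hw : Summable w) (hφ : ∀ i, LipschitzWith K (φ i)) (O : X) :
    X → lp E 1 :=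
  fun v => ⟨fun i => (w i : ℝ) • (φ i v - φ i O), memℓp_one_smul_sub hw hφ v O⟩

variable (hw : Summable w) (hφ : ∀ i, LipschitzWith K (φ i)) (O : X)

theorem lpGlue_apply (v : X) (i : ι) :
    (lpGlue hw hφ O v : ∀ i, E i) i = (w i : ℝ) • (φ i v - φ i O) :=
  rfl

theorem lpGlue_sub_apply (u v : X) (i : ι) :
    (lpGlue hw hφ O u - lpGlue hw hφ O v) i = (w i : ℝ) • (φ i u - φ i v) := by
  rw [lp.coeFn_sub, Pi.sub_apply, lpGlue_apply, lpGlue_apply, ← smul_sub,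
    sub_sub_sub_cancel_right]

theorem norm_lpGlue_sub (u v : X) :
    ‖lpGlue hw hφ O u - lpGlue hw hφ O v‖ = ∑' i, (w i : ℝ) * ‖φ i u - φ i v‖ := by
  simp [lp.norm_eq_tsum_norm, lpGlue_sub_apply, norm_smul]

theorem mul_norm_sub_le_norm_lpGlue_sub (u v : X) (i : ι) :
    (w i : ℝ) * ‖φ i u - φ i v‖ ≤ ‖lpGlue hw hφ O u - lpGlue hw hφ O v‖ := by
  simpa [lpGlue_sub_apply, norm_smul] using
    lp.norm_apply_le_norm one_ne_zero (lpGlue hw hφ O u - lpGlue hw hφ O v) i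

theorem lipschitzWith_lpGlue : LipschitzWith (K * ∑' i, w i) (lpGlue hw hφ O) := by
  refine LipschitzWith.of_dist_le_mul fun u v => ?_
  calc dist (lpGlue hw hφ O u) (lpGlue hw hφ O v)
      = ∑' i, (w i : ℝ) * ‖φ i u - φ i v‖ := by rw [dist_eq_norm, norm_lpGlue_sub]
    _ ≤ ∑' i, (w i : ℝ) * (K * dist u v) :=
      (summable_mul_norm_sub hw hφ u v).tsum_le_tsum
        (fun i => mul_le_mul_of_nonneg_left (norm_sub_le_mul_dist hφ i u v) (w i).2)
        ((NNReal.summable_coe.2 hw).mul_right _)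
    _ = ↑(K * ∑' i, w i) * dist u v := by
      rw [tsum_mul_right, NNReal.coe_mul, NNReal.coe_tsum]
      ring

end Glue

theorem gluing_coarse_embedding_general {X : Type*} [MetricSpace X] (E : ℕ → Type*)
    [∀ i, NormedAddCommGroup (E i)] [∀ i, NormedSpace ℝ (E i)]
    (φi : (i : ℕ) → X → E i) (hLip : ∀ i, LipschitzWith 1 (φi i))
    (O : X) (ε : ℝ) (hε : 0 < ε)
    (d : ℕ → ℝ) (hdtop : Tendsto d atTop atTop)
    (hlow : ∀ (i : ℕ) (u v : X), d i ≤ dist u v → 2 ^ i * ε ≤ ‖φi i u - φi i v‖) :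
    ∃ Φ : X → lp E 1,
      (∀ (v : X) (i : ℕ), (Φ v : ∀ i, E i) i = ((2 : ℝ) / 3) ^ i • (φi i v - φi i O)) ∧
      LipschitzWith 3 Φ ∧
      (∀ (i : ℕ) (u v : X), d i ≤ dist u v → ((4 : ℝ) / 3) ^ i * ε ≤ ‖Φ u - Φ v‖) ∧
      (∃ ρ₁ ρ₂ : ℝ → ℝ, Monotone ρ₁ ∧ Monotone ρ₂ ∧
        (∀ u v : X, ρ₁ (dist u v) ≤ ‖Φ u - Φ v‖ ∧ ‖Φ u - Φ v‖ ≤ ρ₂ (dist u v)) ∧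
        Tendsto ρ₁ atTop atTop) := by
  have hr : (2 / 3 : ℝ≥0) < 1 := by norm_num
  have hw := NNReal.summable_geometric hr
  have hsum : ∑' i : ℕ, (2 / 3 : ℝ≥0) ^ i = 3 := by
    rw [← NNReal.coe_inj]
    push_cast
    rw [tsum_geometric_of_lt_one (by norm_num) (by norm_num)]
    norm_num
  set Φ := lpGlue hw hLip O
  have hΦLip : LipschitzWith 3 Φ := by simpa [hsum] using lipschitzWith_lpGlue hw hLip O
  have hΦlow (i : ℕ) (u v : X) (h : d i ≤ dist u v) : (4 / 3 : ℝ) ^ i * ε ≤ ‖Φ u - Φ v‖ :=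
    calc (4 / 3 : ℝ) ^ i * ε = (2 / 3 : ℝ) ^ i * (2 ^ i * ε) := by
          rw [← mul_assoc, ← mul_pow]; norm_num
      _ ≤ (2 / 3 : ℝ) ^ i * ‖φi i u - φi i v‖ := by gcongr; exact hlow i u v h
      _ ≤ ‖Φ u - Φ v‖ := by simpa using mul_norm_sub_le_norm_lpGlue_sub hw hLip O u v i
  have hd : Tendsto d cofinite atTop := Nat.cofinite_eq_atTop ▸ hdtop
  have ha : ¬BddAbove (range fun i : ℕ => (4 / 3 : ℝ) ^ i * ε) :=
    not_bddAbove_of_tendsto_atTop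
      ((tendsto_pow_atTop_atTop_of_one_lt (by norm_num)).atTop_mul_const hε)
  refine ⟨Φ, fun v i => by simp [Φ, lpGlue_apply], hΦLip, hΦlow,
    thresholdEnvelope d _, fun t => 3 * t, monotone_thresholdEnvelope hd,
    fun s t hst => by linarith, fun u v => ⟨?_, ?_⟩, tendsto_thresholdEnvelope hd ha⟩
  · exact thresholdEnvelope_le (norm_nonneg _) fun i h => hΦlow i u v h
  · simpa [dist_eq_norm] using hΦLip.dist_le_mul u v

/-- Gluing lemma for coarse embeddings.  Given `1`-Lipschitz maps `φ_i : X → L₁(Ω_i)`,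
a basepoint `O`, `ε > 0` and a nondecreasing sequence `d_i → ∞` such that
`d(u,v) ≥ d_i ⟹ ‖φ_i(u) − φ_i(v)‖ ≥ 2^i ε`, the map
`Φ(v) = ⊕_i (2/3)^i (φ_i(v) − φ_i(O))` is a well-defined map into the `ℓ₁`-sum of the
spaces, is `3`-Lipschitz, satisfies `‖Φ(u) − Φ(v)‖ ≥ (4/3)^i ε` whenever `d(u,v) ≥ d_i`,
and is a coarse embedding. -/
theorem gluing_coarse_embedding {X : Type*} [MetricSpace X] (E : ℕ → Type*)
    [∀ i, NormedAddCommGroup (E i)] [∀ i, NormedSpace ℝ (E i)]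
    (φi : (i : ℕ) → X → E i) (hLip : ∀ i, LipschitzWith 1 (φi i))
    (O : X) (ε : ℝ) (hε : 0 < ε)
    (d : ℕ → ℝ) (hd : Monotone d) (hdtop : Tendsto d atTop atTop)
    (hlow : ∀ (i : ℕ) (u v : X), d i ≤ dist u v → 2 ^ i * ε ≤ ‖φi i u - φi i v‖) :
    ∃ Φ : X → lp E 1,
      (∀ (v : X) (i : ℕ), (Φ v : ∀ i, E i) i = ((2 : ℝ) / 3) ^ i • (φi i v - φi i O)) ∧
      LipschitzWith 3 Φ ∧
      (∀ (i : ℕ) (u v : X), d i ≤ dist u v → ((4 : ℝ) / 3) ^ i * ε ≤ ‖Φ u - Φ v‖) ∧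
      (∃ ρ₁ ρ₂ : ℝ → ℝ, Monotone ρ₁ ∧ Monotone ρ₂ ∧
        (∀ u v : X, ρ₁ (dist u v) ≤ ‖Φ u - Φ v‖ ∧ ‖Φ u - Φ v‖ ≤ ρ₂ (dist u v)) ∧
        Tendsto ρ₁ atTop atTop) :=
  gluing_coarse_embedding_general E φi hLip O ε hε d hdtop hlow
end

section
/- Uniform lower integral bound implies sign-separated L₁ distance at scale Δ: with the KPR random decomposition of a K_r-minor-free graph X at scale Δ, if u, v are vertices with d(u,v) ≥ (r−1)(4(r+1)Δ+1) (so u and v lie in different components for every random choice λ of cut levels), and if ∫_Λ |F_{Δ,u}(λ,θ)| dλ ≥ ε_r Δ for every θ (and likewise for v), then ‖F_{Δ,u} − F_{Δ,v}‖_{L₁(Ω_Δ)} ≥ ε_r Δ. -/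
/-!
For a fixed cut level `λ` the signs at `u` and `v` disagree with probability exactly `1/2`, so
averaging `|±a ∓ b|` over `θ` gives `(|a + b| + |a - b|) / 2`, which is at least `|a|` by the
triangle inequality. Fubini integrates this fiberwise bound over `λ`, and `∫ |a| dλ ≥ ε_r Δ` is
the hypothesis on `F_u`.
-/

open MeasureTheory

lemma abs_le_half_abs_add_add_abs_sub (a b : ℝ) : |a| ≤ (|a + b| + |a - b|) / 2 := by
  have h := abs_add_le (a + b) (a - b)
  rw [show a + b + (a - b) = 2 * a by ring, abs_mul, abs_two] at h
  linarith

lemma abs_sign_mul_sub_sign_mul {s t : ℝ} (hs : s = 1 ∨ s = -1) (ht : t = 1 ∨ t = -1)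
    (a b : ℝ) : |s * a - t * b| = if s ≠ t then |a + b| else |a - b| := by
  rcases hs with rfl | rfl <;> rcases ht with rfl | rfl <;> norm_num
  · rw [← abs_neg, neg_sub_left, neg_neg, add_comm]
  · rw [neg_add_eq_sub, abs_sub_comm]

theorem integral_abs_sign_mul_sub_sign_mul {Θ : Type*} [MeasurableSpace Θ] {P : Measure Θ}
    [IsProbabilityMeasure P] {s t : Θ → ℝ} (hs : Measurable s) (ht : Measurable t)
    (hs₁ : ∀ θ, s θ = 1 ∨ s θ = -1) (ht₁ : ∀ θ, t θ = 1 ∨ t θ = -1)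
    (hst : P {θ | s θ ≠ t θ} = 1 / 2) (a b : ℝ) :
    ∫ θ, |s θ * a - t θ * b| ∂P = (|a + b| + |a - b|) / 2 := by
  classical
  set S := {θ | s θ ≠ t θ}
  have hS : MeasurableSet S := (measurableSet_eq_fun hs ht).compl
  have hPS : P.real S = 1 / 2 := by simp [measureReal_def, hst]
  have hpiece :
      (fun θ => |s θ * a - t θ * b|) = S.piecewise (fun _ => |a + b|) fun _ => |a - b| := by
    funext θ
    rw [abs_sign_mul_sub_sign_mul (hs₁ θ) (ht₁ θ)]
    rfl
  rw [hpiece, integral_piecewise hS integrableOn_const integrableOn_const,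
    setIntegral_const, setIntegral_const, probReal_compl_eq_one_sub hS, hPS]
  simp only [smul_eq_mul]
  ring

lemma integrable_mul_fst_sub_mul_fst {Λ Θ : Type*} [MeasurableSpace Λ] [MeasurableSpace Θ]
    {μ : Measure Λ} {P : Measure Θ} [IsFiniteMeasure P] {σ τ : Λ × Θ → ℝ}
    (hσ : Measurable σ) (hτ : Measurable τ) (hσ₁ : ∀ q, |σ q| ≤ 1) (hτ₁ : ∀ q, |τ q| ≤ 1)
    {a b : Λ → ℝ} (ha : Integrable a μ) (hb : Integrable b μ) :
    Integrable (fun q => σ q * a q.1 - τ q * b q.1) (μ.prod P) :=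
  ((ha.comp_fst P).bdd_mul hσ.aestronglyMeasurable (ae_of_all _ hσ₁)).sub
    ((hb.comp_fst P).bdd_mul hτ.aestronglyMeasurable (ae_of_all _ hτ₁))

theorem kpr_sign_separated_L1_bound_general {Λ Θ : Type*} [MeasurableSpace Λ] [MeasurableSpace Θ]
    (μ : Measure Λ) (P : Measure Θ) [IsProbabilityMeasure μ] [IsProbabilityMeasure P]
    (X : ℕ → Θ → ℝ) (hXmeas : ∀ j, Measurable (X j))
    (hXval : ∀ (j : ℕ) (θ : Θ), X j θ = 1 ∨ X j θ = -1)
    (hXdiff : ∀ i j : ℕ, i ≠ j → P {θ | X i θ ≠ X j θ} = 1 / 2)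
    (k l : Λ → ℕ) (hk : Measurable k) (hl : Measurable l) (hkl : ∀ x : Λ, k x ≠ l x)
    (a b : Λ → ℝ)
    (hai : Integrable a μ) (hbi : Integrable b μ)
    (εr Δ : ℝ)
    (hA : ∀ θ : Θ, εr * Δ ≤ ∫ x, |X (k x) θ * a x| ∂μ) :
    εr * Δ ≤ ∫ q : Λ × Θ, |X (k q.1) q.2 * a q.1 - X (l q.1) q.2 * b q.1| ∂(μ.prod P) := by
  obtain ⟨θ₀⟩ := nonempty_of_isProbabilityMeasure P
  have hXabs : ∀ j θ, |X j θ| = 1 := fun j θ => by rcases hXval j θ with h | h <;> simp [h]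
  have hXcomp : ∀ m : Λ → ℕ, Measurable m → Measurable fun q : Λ × Θ => X (m q.1) q.2 :=
    fun m hm =>
      (measurable_from_prod_countable_left (f := fun p : Θ × ℕ => X p.2 p.1) hXmeas).comp
        (measurable_snd.prodMk (hm.comp measurable_fst))
  have hF := integrable_mul_fst_sub_mul_fst (P := P) (hXcomp k hk) (hXcomp l hl)
    (fun _ => (hXabs _ _).le) (fun _ => (hXabs _ _).le) hai hbi
  calc εr * Δ ≤ ∫ x, |a x| ∂μ := by simpa [abs_mul, hXabs] using hA θ₀
    _ ≤ ∫ x, ∫ θ, |X (k x) θ * a x - X (l x) θ * b x| ∂P ∂μ := by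
      refine integral_mono_of_nonneg (ae_of_all _ fun _ => abs_nonneg _)
        hF.abs.integral_prod_left (ae_of_all _ fun x => ?_)
      dsimp only
      rw [integral_abs_sign_mul_sub_sign_mul (hXmeas _) (hXmeas _) (hXval _) (hXval _)
        (hXdiff _ _ (hkl x))]
      exact abs_le_half_abs_add_add_abs_sub _ _
    _ = _ := (integral_prod _ hF.abs).symm

/-- Uniform lower integral bound implies sign-separated `L₁` distance at scale `Δ`.
Abstractly: `Ω = Λ × Θ` with product probability measure, fair-coin signs
`X j : Θ → {-1,1}` with `P(X i ≠ X j) = 1/2` for `i ≠ j`;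
`F_u(λ,θ) = X_{k(λ)}(θ)·a(λ)` and `F_v(λ,θ) = X_{l(λ)}(θ)·b(λ)` where
`a(λ) = dist(u, ⋃ D_i(λ)) ≥ 0`, `b(λ) = dist(v, ⋃ D_i(λ)) ≥ 0`, and `u, v` lie in
different components for every `λ`, i.e. `k(λ) ≠ l(λ)`.  If for every `θ`
`∫_Λ |F_u(λ,θ)| dλ ≥ ε_r Δ` and likewise for `v`, then
`‖F_u − F_v‖_{L₁(Ω)} ≥ ε_r Δ`. -/
theorem kpr_sign_separated_L1_bound {Λ Θ : Type*} [MeasurableSpace Λ] [MeasurableSpace Θ]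
    (μ : Measure Λ) (P : Measure Θ) [IsProbabilityMeasure μ] [IsProbabilityMeasure P]
    (X : ℕ → Θ → ℝ) (hXmeas : ∀ j, Measurable (X j))
    (hXval : ∀ (j : ℕ) (θ : Θ), X j θ = 1 ∨ X j θ = -1)
    (hXdiff : ∀ i j : ℕ, i ≠ j → P {θ | X i θ ≠ X j θ} = 1 / 2)
    (k l : Λ → ℕ) (hk : Measurable k) (hl : Measurable l) (hkl : ∀ x : Λ, k x ≠ l x)
    (a b : Λ → ℝ) (ha0 : ∀ x, 0 ≤ a x) (hb0 : ∀ x, 0 ≤ b x)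
    (hai : Integrable a μ) (hbi : Integrable b μ)
    (εr Δ : ℝ) (hε : 0 < εr) (hΔ : 0 < Δ)
    (hA : ∀ θ : Θ, εr * Δ ≤ ∫ x, |X (k x) θ * a x| ∂μ)
    (hB : ∀ θ : Θ, εr * Δ ≤ ∫ x, |X (l x) θ * b x| ∂μ) :
    εr * Δ ≤ ∫ q : Λ × Θ, |X (k q.1) q.2 * a q.1 - X (l q.1) q.2 * b q.1| ∂(μ.prod P) :=
  kpr_sign_separated_L1_bound_general μ P X hXmeas hXval hXdiff k l hk hl hkl a b hai hbi εr Δ hA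
end
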